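/- arXiv:1603.03342 — 5 statements merged into one kernel-verified Lean document; each statement's English description precedes it below -/
import Mathlib

section
/- Let N ≥ 2, m₁,…,m_N > 0, and c > 0. Then there exists exactly one tuple (θ₁,…,θ_N) ∈ ℝ^N with θ₁ < θ₂ < ⋯ < θ_N such that Σᵢ mᵢ sinh²θᵢ = c and there exists λ ∈ ℝ with Σ_{j≠i} mᵢmⱼ · sgn(θⱼ−θᵢ)/sinh²(θᵢ−θⱼ) = λ mᵢ sinh(2θᵢ) for every i = 1,…,N. (Consequently, for each c > 0 and each of the N! orderings of the masses along the geodesic there is exactly one geodesic central configuration with I = c, giving exactly N!/2 geodesic central configurations up to the rotation identifying reversed orderings.) -/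
noncomputable section
open Real Finset

/-- Vectors in `ℝ⁴`. -/
abbrev V4 : Type := Fin 4 → ℝ

/-- Euclidean dot product on `ℝ⁴`. -/
def dot4 (p q : V4) : ℝ := p 0 * q 0 + p 1 * q 1 + p 2 * q 2 + p 3 * q 3

/-- Minkowski bilinear form on `ℝ⁴`. -/
def mdot4 (p q : V4) : ℝ := p 0 * q 0 + p 1 * q 1 + p 2 * q 2 - p 3 * q 3

/-- The unit sphere `S³ ⊂ ℝ⁴`. -/
def sphere3 : Set V4 := {p | p 0 ^ 2 + p 1 ^ 2 + p 2 ^ 2 + p 3 ^ 2 = 1}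

/-- The upper hyperbolic sphere `H³ ⊂ ℝ⁴`. -/
def hyper3 : Set V4 := {p | p 0 ^ 2 + p 1 ^ 2 + p 2 ^ 2 - p 3 ^ 2 = -1 ∧ 0 < p 3}

/-- Inverse hyperbolic cosine. -/
def arcosh (x : ℝ) : ℝ := Real.log (x + Real.sqrt (x ^ 2 - 1))

/-- Spherical distance on `S³`. -/
def dS (p q : V4) : ℝ := Real.arccos (dot4 p q)

/-- Hyperbolic distance on `H³`. -/
def dH (p q : V4) : ℝ := _root_.arcosh (-(mdot4 p q))

/-- Gradient of the cotangent force function on `(S³)^N` at the body `i`. -/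
def gradUS {N : ℕ} (m : Fin N → ℝ) (q : Fin N → V4) (i : Fin N) : V4 :=
  ∑ j ∈ Finset.univ.erase i,
    (m i * m j / (Real.sin (dS (q i) (q j))) ^ 3) • (q j - Real.cos (dS (q i) (q j)) • q i)

/-- Gradient of the cotangent force function on `(H³)^N` at the body `i`. -/
def gradUH {N : ℕ} (m : Fin N → ℝ) (q : Fin N → V4) (i : Fin N) : V4 :=
  ∑ j ∈ Finset.univ.erase i,
    (m i * m j / (Real.sinh (dH (q i) (q j))) ^ 3) • (q j - Real.cosh (dH (q i) (q j)) • q i)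

/-- Gradient of the moment of inertia `I(q) = Σ mᵢ(xᵢ²+yᵢ²)` on `(S³)^N` at the body `i`. -/
def gradIS {N : ℕ} (m : Fin N → ℝ) (q : Fin N → V4) (i : Fin N) : V4 :=
  (2 * m i) •
    ![q i 0 * (q i 2 ^ 2 + q i 3 ^ 2), q i 1 * (q i 2 ^ 2 + q i 3 ^ 2),
      -(q i 2 * (q i 0 ^ 2 + q i 1 ^ 2)), -(q i 3 * (q i 0 ^ 2 + q i 1 ^ 2))]

/-- Gradient of the moment of inertia `I(q) = Σ mᵢ(xᵢ²+yᵢ²)` on `(H³)^N` at the body `i`. -/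
def gradIH {N : ℕ} (m : Fin N → ℝ) (q : Fin N → V4) (i : Fin N) : V4 :=
  (2 * m i) •
    ![q i 0 * (q i 3 ^ 2 - q i 2 ^ 2), q i 1 * (q i 3 ^ 2 - q i 2 ^ 2),
      q i 2 * (q i 0 ^ 2 + q i 1 ^ 2), q i 3 * (q i 0 ^ 2 + q i 1 ^ 2)]

/-- The action of the rotation `A_{α,β}(t) ∈ SO(4)` on `ℝ⁴`. -/
def rotA (α β t : ℝ) (p : V4) : V4 :=
  ![Real.cos (α * t) * p 0 - Real.sin (α * t) * p 1,
    Real.sin (α * t) * p 0 + Real.cos (α * t) * p 1,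
    Real.cos (β * t) * p 2 - Real.sin (β * t) * p 3,
    Real.sin (β * t) * p 2 + Real.cos (β * t) * p 3]

/-- The action of the transformation `B_{α,β}(t) ∈ SO(3,1)` on `ℝ⁴`. -/
def rotB (α β t : ℝ) (p : V4) : V4 :=
  ![Real.cos (α * t) * p 0 - Real.sin (α * t) * p 1,
    Real.sin (α * t) * p 0 + Real.cos (α * t) * p 1,
    Real.cosh (β * t) * p 2 + Real.sinh (β * t) * p 3,
    Real.sinh (β * t) * p 2 + Real.cosh (β * t) * p 3]

/-- The great circle `S¹_xy`. -/
def S1xy : Set V4 := {p | p 0 ^ 2 + p 1 ^ 2 = 1 ∧ p 2 = 0 ∧ p 3 = 0}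

/-- The great circle `S¹_zw`. -/
def S1zw : Set V4 := {p | p 2 ^ 2 + p 3 ^ 2 = 1 ∧ p 0 = 0 ∧ p 1 = 0}

/-- The geodesic `H¹_zw`. -/
def H1zw : Set V4 := {p | p 3 ^ 2 - p 2 ^ 2 = 1 ∧ 0 < p 3 ∧ p 0 = 0 ∧ p 1 = 0}

/-!
Existence. On the level set `I = c` the force function `U` blows up at collisions: for `i < j`,
`m i * m j ≤ U θ * sinh (θ j - θ i)`. Hence, with `u` above the value of `U` at one ordered
configuration on the level set, `U` attains its minimum over the compact set where every pair
satisfies `m i * m j ≤ u * sinh (θ j - θ i)` at a point where all these inequalities are strict, i.e.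
at a local minimum of `U` on the level set. The Lagrange multiplier rule applies there, and the
multiplier of `U` is nonzero because `∇I` vanishes only at `θ = 0`.

Uniqueness. Pairing the equations with `θ` gives `∑ θᵢ ∂ᵢU = λ ∑ mᵢ θᵢ sinh 2θᵢ`. The left side is
negative (`U` decreases when the configuration is dilated) and the sum on the right is nonnegative,
so `λ < 0`. On the convex cone of ordered configurations `U` is convex (`coth` is convex on
`(0, ∞)`) and `I` is strictly convex (`sinh²` is), so a central configuration is the unique
minimiser of `U - λ I` on the cone. Two central configurations with the same `I` therefore
minimise each other's function, and coincide.
-/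

lemma strictConvexOn_sinh_sq : StrictConvexOn ℝ Set.univ fun x => sinh x ^ 2 := by
  have hderiv : deriv (fun x => sinh x ^ 2) = fun x => sinh (2 * x) := by
    funext x
    rw [((hasDerivAt_sinh x).fun_pow 2).deriv, sinh_two_mul]
    ring
  refine StrictMono.strictConvexOn_univ_of_deriv (continuous_sinh.pow 2) ?_
  rw [hderiv]
  exact sinh_strictMono.comp (strictMono_mul_left_of_pos two_pos)

lemma sq_le_sinh_sq (x : ℝ) : x ^ 2 ≤ sinh x ^ 2 := by
  rw [← sq_abs x, ← sq_abs (sinh x), abs_sinh]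
  exact pow_le_pow_left₀ (abs_nonneg x) (self_le_sinh_iff.2 (abs_nonneg x)) 2

lemma mul_sinh_two_mul_nonneg (x : ℝ) : 0 ≤ x * sinh (2 * x) := by
  rcases le_total 0 x with hx | hx
  · exact mul_nonneg hx (sinh_nonneg_iff.2 (by linarith))
  · exact mul_nonneg_of_nonpos_of_nonpos hx (sinh_nonpos_iff.2 (by linarith))

lemma convexOn_finsetSum {𝕜 E β ι : Type*} [Semiring 𝕜] [PartialOrder 𝕜] [AddCommMonoid E]
    [SMul 𝕜 E] [AddCommMonoid β] [PartialOrder β] [IsOrderedAddMonoid β] [Module 𝕜 β]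
    {s : Set E} (hs : Convex 𝕜 s) (t : Finset ι) {f : ι → E → β}
    (hf : ∀ i ∈ t, ConvexOn 𝕜 s (f i)) : ConvexOn 𝕜 s fun x => ∑ i ∈ t, f i x := by
  classical
  induction t using Finset.induction_on with
  | empty => simpa using convexOn_const 0 hs
  | insert a t ha ih =>
    simp only [sum_insert ha]
    exact (hf a (mem_insert_self a t)).add (ih fun i hi => hf i (mem_insert_of_mem hi))

lemma strictConvexOn_sum_apply {ι : Type*} [Fintype ι] {f : ι → ℝ → ℝ}
    (hf : ∀ i, StrictConvexOn ℝ Set.univ (f i)) :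
    StrictConvexOn ℝ Set.univ fun x : ι → ℝ => ∑ i, f i (x i) := by
  refine ⟨convex_univ, fun x _ y _ hxy a b ha hb hab => ?_⟩
  obtain ⟨i₀, hi₀⟩ := Function.ne_iff.1 hxy
  simp only [Pi.add_apply, Pi.smul_apply, smul_eq_mul, mul_sum, ← sum_add_distrib]
  refine sum_lt_sum (fun i _ => (hf i).convexOn.2 trivial trivial ha.le hb.le hab)
    ⟨i₀, mem_univ i₀, (hf i₀).2 trivial trivial hi₀ ha hb hab⟩

lemma ConvexOn.isMinOn_of_hasFDerivAt_eq_zero {E : Type*} [NormedAddCommGroup E]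
    [NormedSpace ℝ E] {s : Set E} {f : E → ℝ} {a : E} (hf : ConvexOn ℝ s f) (ha : a ∈ s)
    (hf' : HasFDerivAt f (0 : E →L[ℝ] ℝ) a) : IsMinOn f s a := by
  intro x hx
  show f a ≤ f x
  have hline : HasDerivAt (fun t : ℝ => f (a + t • (x - a))) 0 0 := by
    have hγ : HasDerivAt (fun t : ℝ => a + t • (x - a)) (x - a) 0 := by
      simpa using ((hasDerivAt_id (0 : ℝ)).smul_const (x - a)).const_add a
    simpa [Function.comp_def] using hf'.comp_hasDerivAt_of_eq (0 : ℝ) hγ (by simp)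
  rw [← sub_nonneg]
  refine le_of_tendsto (by simpa using hline.tendsto_slope_zero_right) ?_
  filter_upwards [Ioc_mem_nhdsGT one_pos] with t ht
  have hconv := hf.2 ha hx (sub_nonneg.2 ht.2) ht.1.le (sub_add_cancel 1 t)
  rw [show (1 - t) • a + t • x = a + t • (x - a) by module] at hconv
  rw [inv_mul_le_iff₀ ht.1]
  simp only [smul_eq_mul] at hconv
  linarith

lemma convex_setOf_strictMono {ι : Type*} [PartialOrder ι] :
    Convex ℝ {x : ι → ℝ | StrictMono x} := by
  intro x hx y hy a b ha hb hab
  rcases ha.eq_or_lt with rfl | ha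
  · rw [zero_add] at hab
    simpa [hab] using hy
  · intro i j hij
    have hxij := mul_lt_mul_of_pos_left (hx hij) ha
    have hyij := mul_le_mul_of_nonneg_left ((show StrictMono y from hy).monotone hij.le) hb
    simp only [Pi.add_apply, Pi.smul_apply, smul_eq_mul]
    linarith

lemma StrictConvexOn.const_mul {E : Type*} [AddCommMonoid E] [SMul ℝ E] {s : Set E}
    {f : E → ℝ} {c : ℝ} (hc : 0 < c) (hf : StrictConvexOn ℝ s f) :
    StrictConvexOn ℝ s fun x => c * f x := by
  refine ⟨hf.1, fun x hx y hy hxy a b ha hb hab => ?_⟩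
  have := mul_lt_mul_of_pos_left (hf.2 hx hy hxy ha hb hab) hc
  simp only [smul_eq_mul] at this ⊢
  linarith

namespace GeodesicCentralConfig

def coth (x : ℝ) : ℝ := cosh x / sinh x

lemma coth_pos {x : ℝ} (hx : 0 < x) : 0 < coth x :=
  div_pos (cosh_pos x) (sinh_pos_iff.2 hx)

lemma inv_sinh_le_coth {x : ℝ} (hx : 0 < x) : (sinh x)⁻¹ ≤ coth x := by
  rw [coth, div_eq_mul_inv]
  exact le_mul_of_one_le_left (inv_nonneg.2 (sinh_pos_iff.2 hx).le) (one_le_cosh x)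

lemma hasStrictDerivAt_coth {x : ℝ} (hx : x ≠ 0) :
    HasStrictDerivAt coth (-(sinh x ^ 2)⁻¹) x := by
  have hs := sinh_ne_zero.2 hx
  refine ((hasStrictDerivAt_cosh x).div (hasStrictDerivAt_sinh x) hs).congr_deriv ?_
  field_simp
  linear_combination -cosh_sq_sub_sinh_sq x

lemma convexOn_coth : ConvexOn ℝ (Set.Ioi 0) coth := by
  have hderiv : ∀ x ∈ Set.Ioi (0 : ℝ), HasDerivAt coth (-(sinh x ^ 2)⁻¹) x :=
    fun x hx => (hasStrictDerivAt_coth (ne_of_gt hx)).hasDerivAt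
  refine MonotoneOn.convexOn_of_deriv (convex_Ioi 0)
    (fun x hx => (hderiv x hx).continuousAt.continuousWithinAt) ?_ ?_ <;> rw [interior_Ioi]
  · exact fun x hx => (hderiv x hx).differentiableAt.differentiableWithinAt
  · intro x hx y hy hxy
    rw [(hderiv x hx).deriv, (hderiv y hy).deriv, neg_le_neg_iff]
    have := sinh_pos_iff.2 (Set.mem_Ioi.1 hx)
    gcongr
    exact sinh_le_sinh.2 hxy

variable {N : ℕ}

-- On ordered configurations this is the paper's `U`, since there `θ j - θ i > 0` for `i < j`.
def forceFn (m θ : Fin N → ℝ) : ℝ := ∑ i, ∑ j ∈ Ioi i, m i * m j * coth (θ j - θ i)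

def inertia (m θ : Fin N → ℝ) : ℝ := ∑ i, m i * sinh (θ i) ^ 2

def forceGrad (m θ : Fin N → ℝ) (i : Fin N) : ℝ :=
  ∑ j ∈ univ.erase i, m i * m j * Real.sign (θ j - θ i) / sinh (θ i - θ j) ^ 2

def IsGeodesicCentralConfig (m θ : Fin N → ℝ) : Prop :=
  ∃ lam : ℝ, ∀ i, forceGrad m θ i = lam * m i * sinh (2 * θ i)

def pairWeight (m θ : Fin N → ℝ) (i j : Fin N) : ℝ := m i * m j / sinh (θ j - θ i) ^ 2

local notation "proj" => ContinuousLinearMap.proj (R := ℝ) (φ := fun _ : Fin N => ℝ)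

def dotCLM (v : Fin N → ℝ) : (Fin N → ℝ) →L[ℝ] ℝ := ∑ i, v i • proj i

lemma dotCLM_apply (v w : Fin N → ℝ) : dotCLM v w = ∑ i, v i * w i := by
  simp [dotCLM]

lemma dotCLM_single (v : Fin N → ℝ) (k : Fin N) : dotCLM v (Pi.single k 1) = v k := by
  simp [dotCLM_apply, Pi.single_apply]

lemma forceGrad_eq {m θ : Fin N → ℝ} (hθ : StrictMono θ) (i : Fin N) :
    forceGrad m θ i = ∑ j ∈ Ioi i, pairWeight m θ i j - ∑ j ∈ Iio i, pairWeight m θ j i := by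
  rw [forceGrad, ← compl_singleton, ← Ioi_disjUnion_Iio, sum_disjUnion]
  have hlt : ∀ j ∈ Iio i, m i * m j * Real.sign (θ j - θ i) / sinh (θ i - θ j) ^ 2
      = -pairWeight m θ j i := fun j hj => by
    rw [Real.sign_of_neg (sub_neg.2 (hθ (mem_Iio.1 hj))), pairWeight]
    ring
  have hgt : ∀ j ∈ Ioi i, m i * m j * Real.sign (θ j - θ i) / sinh (θ i - θ j) ^ 2
      = pairWeight m θ i j := fun j hj => by
    rw [Real.sign_of_pos (sub_pos.2 (hθ (mem_Ioi.1 hj))), pairWeight, ← neg_sub, sinh_neg,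
      neg_sq, mul_one]
  rw [sum_congr rfl hlt, sum_congr rfl hgt, sum_neg_distrib, sub_eq_add_neg]

lemma sum_forceGrad_mul {m θ : Fin N → ℝ} (hθ : StrictMono θ) (v : Fin N → ℝ) :
    ∑ k, forceGrad m θ k * v k = ∑ i, ∑ j ∈ Ioi i, pairWeight m θ i j * (v i - v j) := by
  have hswap : ∑ k, ∑ j ∈ Iio k, pairWeight m θ j k * v k
      = ∑ i, ∑ j ∈ Ioi i, pairWeight m θ i j * v j :=
    sum_comm' fun k j => by simp
  simp only [forceGrad_eq hθ, sub_mul, sum_mul, sum_sub_distrib, hswap, mul_sub]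

lemma hasStrictFDerivAt_inertia (m θ : Fin N → ℝ) :
    HasStrictFDerivAt (inertia m) (dotCLM fun i => m i * sinh (2 * θ i)) θ := by
  refine HasStrictFDerivAt.fun_sum fun i _ => ?_
  have h : HasStrictDerivAt (fun x => m i * sinh x ^ 2) (m i * sinh (2 * θ i)) (θ i) :=
    (((hasStrictDerivAt_sinh (θ i)).fun_pow 2).const_mul (m i)).congr_deriv
      (by rw [sinh_two_mul]; ring)
  exact (h.comp_hasStrictFDerivAt θ (hasStrictFDerivAt_apply (𝕜 := ℝ) i θ) :)

lemma hasStrictFDerivAt_forceFn (m : Fin N → ℝ) {θ : Fin N → ℝ} (hθ : StrictMono θ) :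
    HasStrictFDerivAt (forceFn m) (dotCLM (forceGrad m θ)) θ := by
  have hpair (i : Fin N) : ∀ j ∈ Ioi i, HasStrictFDerivAt
      (fun σ : Fin N → ℝ => m i * m j * coth (σ j - σ i))
      (-pairWeight m θ i j • (proj j - proj i)) θ := by
    intro j hj
    have hgap : θ j - θ i ≠ 0 := (sub_pos.2 (hθ (mem_Ioi.1 hj))).ne'
    refine (((hasStrictDerivAt_coth hgap).comp_hasStrictFDerivAt θ
      ((hasStrictFDerivAt_apply j θ).sub (hasStrictFDerivAt_apply (𝕜 := ℝ) i θ))).const_mul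
        (m i * m j)).congr_fderiv ?_
    rw [smul_smul, pairWeight]
    ring_nf
  refine (HasStrictFDerivAt.fun_sum fun i _ =>
    HasStrictFDerivAt.fun_sum (hpair i)).congr_fderiv ?_
  ext v
  simp [dotCLM_apply, sum_forceGrad_mul hθ, ← mul_neg]

lemma convexOn_forceFn {m : Fin N → ℝ} (hm : ∀ i, 0 ≤ m i) :
    ConvexOn ℝ {θ | StrictMono θ} (forceFn m) := by
  have hgap (i j : Fin N) (hij : i < j) :
      ConvexOn ℝ {θ : Fin N → ℝ | StrictMono θ} fun θ => coth (θ j - θ i) := by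
    refine ⟨convex_setOf_strictMono, fun x hx y hy a b ha hb hab => ?_⟩
    have h := convexOn_coth.2 (sub_pos.2 (hx hij)) (sub_pos.2 (hy hij)) ha hb hab
    simp only [Pi.add_apply, Pi.smul_apply, smul_eq_mul] at h ⊢
    convert h using 2
    ring
  unfold forceFn
  refine convexOn_finsetSum convex_setOf_strictMono _ fun i _ =>
    convexOn_finsetSum convex_setOf_strictMono _ fun j hj => ?_
  simpa only [smul_eq_mul] using (hgap i j (mem_Ioi.1 hj)).smul (mul_nonneg (hm i) (hm j))

lemma strictConvexOn_forceFn_add_inertia {m : Fin N → ℝ} (hm : ∀ i, 0 < m i) {μ : ℝ}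
    (hμ : 0 < μ) :
    StrictConvexOn ℝ {θ | StrictMono θ} fun θ => forceFn m θ + μ * inertia m θ := by
  have hI : StrictConvexOn ℝ Set.univ fun θ : Fin N → ℝ => μ * inertia m θ := by
    simpa only [inertia, mul_sum, mul_assoc] using strictConvexOn_sum_apply fun i =>
      strictConvexOn_sinh_sq.const_mul (mul_pos hμ (hm i))
  exact (convexOn_forceFn fun i => (hm i).le).add_strictConvexOn
    (hI.subset (Set.subset_univ _) convex_setOf_strictMono)

lemma pairWeight_pos {m θ : Fin N → ℝ} (hm : ∀ i, 0 < m i) (hθ : StrictMono θ) {i j : Fin N}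
    (hij : i < j) : 0 < pairWeight m θ i j := by
  have := sinh_pos_iff.2 (sub_pos.2 (hθ hij))
  have := hm i
  have := hm j
  unfold pairWeight
  positivity

lemma multiplier_neg (hN : 2 ≤ N) {m θ : Fin N → ℝ} (hm : ∀ i, 0 < m i) (hθ : StrictMono θ)
    {lam : ℝ} (hlam : ∀ i, forceGrad m θ i = lam * m i * sinh (2 * θ i)) : lam < 0 := by
  have hvirial : ∑ k, forceGrad m θ k * θ k = lam * ∑ k, m k * (θ k * sinh (2 * θ k)) := by
    rw [mul_sum]
    exact sum_congr rfl fun k _ => by rw [hlam]; ring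
  have hterm : ∀ i, ∀ j ∈ Ioi i, pairWeight m θ i j * (θ i - θ j) < 0 := fun i j hj =>
    mul_neg_of_pos_of_neg (pairWeight_pos hm hθ (mem_Ioi.1 hj)) (sub_neg.2 (hθ (mem_Ioi.1 hj)))
  have h01 : (⟨1, by omega⟩ : Fin N) ∈ Ioi ⟨0, by omega⟩ := mem_Ioi.2 (Fin.mk_lt_mk.2 one_pos)
  have hneg : ∑ k, forceGrad m θ k * θ k < 0 := by
    rw [sum_forceGrad_mul hθ]
    exact sum_neg' (fun i _ => sum_nonpos fun j hj => (hterm i j hj).le)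
      ⟨_, mem_univ _, sum_neg' (fun j hj => (hterm _ j hj).le) ⟨_, h01, hterm _ _ h01⟩⟩
  have hpos : 0 ≤ ∑ k, m k * (θ k * sinh (2 * θ k)) :=
    sum_nonneg fun k _ => mul_nonneg (hm k).le (mul_sinh_two_mul_nonneg (θ k))
  exact lt_of_not_ge fun h => hneg.not_ge (hvirial ▸ mul_nonneg h hpos)

lemma isMinOn_of_isGeodesicCentralConfig (hN : 2 ≤ N) {m θ : Fin N → ℝ} (hm : ∀ i, 0 < m i)
    (hθ : StrictMono θ) {lam : ℝ} (hlam : ∀ i, forceGrad m θ i = lam * m i * sinh (2 * θ i)) :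
    IsMinOn (fun σ => forceFn m σ + -lam * inertia m σ) {σ | StrictMono σ} θ := by
  have hμ : 0 < -lam := neg_pos.2 (multiplier_neg hN hm hθ hlam)
  refine (strictConvexOn_forceFn_add_inertia hm hμ).convexOn.isMinOn_of_hasFDerivAt_eq_zero hθ ?_
  refine ((hasStrictFDerivAt_forceFn m hθ).hasFDerivAt.add
    ((hasStrictFDerivAt_inertia m θ).hasFDerivAt.const_mul (-lam))).congr_fderiv ?_
  ext v
  simp [dotCLM_apply, hlam, mul_sum, mul_assoc]

lemma eq_of_isGeodesicCentralConfig (hN : 2 ≤ N) {m θ σ : Fin N → ℝ} (hm : ∀ i, 0 < m i)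
    (hθ : StrictMono θ) (hσ : StrictMono σ) (hI : inertia m θ = inertia m σ)
    (hθc : IsGeodesicCentralConfig m θ) (hσc : IsGeodesicCentralConfig m σ) : θ = σ := by
  obtain ⟨lam, hlam⟩ := hθc
  obtain ⟨lam', hlam'⟩ := hσc
  have hμ : 0 < -lam := neg_pos.2 (multiplier_neg hN hm hθ hlam)
  have hθmin := isMinOn_of_isGeodesicCentralConfig hN hm hθ hlam
  have hσmin := isMinOn_of_isGeodesicCentralConfig hN hm hσ hlam'
  have hU : forceFn m θ = forceFn m σ := by
    have h₁ : forceFn m θ + -lam * inertia m θ ≤ forceFn m σ + -lam * inertia m σ := hθmin hσ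
    have h₂ : forceFn m σ + -lam' * inertia m σ ≤ forceFn m θ + -lam' * inertia m θ := hσmin hθ
    rw [hI] at h₁ h₂
    linarith
  refine (strictConvexOn_forceFn_add_inertia hm hμ).eq_of_isMinOn hθmin (fun ρ hρ => ?_) hθ hσ
  show forceFn m σ + -lam * inertia m σ ≤ _
  rw [← hU, ← hI]
  exact hθmin hρ

lemma forceFn_term_nonneg {m θ : Fin N → ℝ} (hm : ∀ i, 0 < m i) (hθ : StrictMono θ)
    {i j : Fin N} (hij : i < j) : 0 ≤ m i * m j * coth (θ j - θ i) :=
  (mul_pos (mul_pos (hm i) (hm j)) (coth_pos (sub_pos.2 (hθ hij)))).le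

lemma forceFn_nonneg {m θ : Fin N → ℝ} (hm : ∀ i, 0 < m i) (hθ : StrictMono θ) :
    0 ≤ forceFn m θ :=
  sum_nonneg fun _ _ => sum_nonneg fun _ hj => forceFn_term_nonneg hm hθ (mem_Ioi.1 hj)

lemma mul_le_forceFn_mul_sinh {m θ : Fin N → ℝ} (hm : ∀ i, 0 < m i) (hθ : StrictMono θ)
    {i j : Fin N} (hij : i < j) : m i * m j ≤ forceFn m θ * sinh (θ j - θ i) := by
  have hgap : 0 < θ j - θ i := sub_pos.2 (hθ hij)
  have hs := sinh_pos_iff.2 hgap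
  have hterm : m i * m j * coth (θ j - θ i) ≤ forceFn m θ :=
    (single_le_sum (fun _ hl => forceFn_term_nonneg hm hθ (mem_Ioi.1 hl)) (mem_Ioi.2 hij)).trans
      (single_le_sum (f := fun k => ∑ l ∈ Ioi k, m k * m l * coth (θ l - θ k))
        (fun _ _ => sum_nonneg fun _ hl => forceFn_term_nonneg hm hθ (mem_Ioi.1 hl)) (mem_univ i))
  calc m i * m j = m i * m j * (sinh (θ j - θ i))⁻¹ * sinh (θ j - θ i) := by field_simp
    _ ≤ m i * m j * coth (θ j - θ i) * sinh (θ j - θ i) := by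
      have := mul_pos (hm i) (hm j)
      gcongr
      exact inv_sinh_le_coth hgap
    _ ≤ forceFn m θ * sinh (θ j - θ i) := by gcongr

lemma abs_le_sqrt_of_inertia_eq {m θ : Fin N → ℝ} (hm : ∀ i, 0 < m i) {c : ℝ}
    (hθ : inertia m θ = c) (i : Fin N) : |θ i| ≤ √(c / m i) := by
  refine abs_le_sqrt ?_
  rw [le_div_iff₀ (hm i), ← hθ]
  calc θ i ^ 2 * m i ≤ sinh (θ i) ^ 2 * m i :=
        mul_le_mul_of_nonneg_right (sq_le_sinh_sq _) (hm i).le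
    _ = m i * sinh (θ i) ^ 2 := mul_comm _ _
    _ ≤ inertia m θ :=
      single_le_sum (f := fun k => m k * sinh (θ k) ^ 2)
        (fun k _ => mul_nonneg (hm k).le (sq_nonneg _)) (mem_univ i)

lemma exists_strictMono_inertia_eq {m : Fin N → ℝ} (hm : ∀ i, 0 < m i) (i₀ : Fin N) {c : ℝ}
    (hc : 0 < c) : ∃ p : Fin N → ℝ, StrictMono p ∧ inertia m p = c := by
  let ray (t : ℝ) : Fin N → ℝ := fun i => t * ((i : ℝ) + 1)
  have hcont : Continuous fun t => inertia m (ray t) := by unfold inertia; fun_prop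
  have hray0 : inertia m (ray 0) = 0 := by simp [ray, inertia]
  set T := √(c / m i₀) with hT
  have hcT : c ≤ inertia m (ray T) := by
    have hTray : T ≤ ray T i₀ := le_mul_of_one_le_right (sqrt_nonneg _) (by simp)
    calc c = m i₀ * T ^ 2 := by
          rw [hT, sq_sqrt (div_pos hc (hm i₀)).le, mul_div_cancel₀ _ (hm i₀).ne']
      _ ≤ m i₀ * sinh (ray T i₀) ^ 2 := mul_le_mul_of_nonneg_left
          ((pow_le_pow_left₀ (sqrt_nonneg _) hTray 2).trans (sq_le_sinh_sq _)) (hm i₀).le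
      _ ≤ inertia m (ray T) :=
          single_le_sum (f := fun k => m k * sinh (ray T k) ^ 2)
            (fun k _ => mul_nonneg (hm k).le (sq_nonneg _)) (mem_univ i₀)
  obtain ⟨t, ht, hIt⟩ : ∃ t ∈ Set.Icc 0 T, inertia m (ray t) = c :=
    intermediate_value_Icc (sqrt_nonneg _) hcont.continuousOn ⟨hray0.symm ▸ hc.le, hcT⟩
  have htpos : 0 < t := ht.1.lt_of_ne fun h => by
    rw [← h, hray0] at hIt
    exact hc.ne hIt
  refine ⟨ray t, fun i j hij => ?_, hIt⟩
  have : (i : ℝ) < j := by exact_mod_cast hij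
  simp only [ray]
  gcongr

def separatedLevelSet (m : Fin N → ℝ) (c u : ℝ) : Set (Fin N → ℝ) :=
  {θ | inertia m θ = c ∧ ∀ i j, i < j → m i * m j ≤ u * sinh (θ j - θ i)}

lemma strictMono_of_mem_separatedLevelSet {m θ : Fin N → ℝ} (hm : ∀ i, 0 < m i) {c u : ℝ}
    (hu : 0 < u) (hθ : θ ∈ separatedLevelSet m c u) : StrictMono θ := fun i j hij =>
  sub_pos.1 <| sinh_pos_iff.1 <|
    pos_of_mul_pos_right ((mul_pos (hm i) (hm j)).trans_le (hθ.2 i j hij)) hu.le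

lemma isCompact_separatedLevelSet {m : Fin N → ℝ} (hm : ∀ i, 0 < m i) (c u : ℝ) :
    IsCompact (separatedLevelSet m c u) := by
  have hclosed : IsClosed (separatedLevelSet m c u) := by
    simp only [separatedLevelSet, Set.ofPred_and, Set.ofPred_forall]
    refine (isClosed_eq (by unfold inertia; fun_prop) continuous_const).inter
      (isClosed_iInter fun i => isClosed_iInter fun j => isClosed_iInter fun _ =>
        isClosed_le continuous_const (by fun_prop))
  exact (isCompact_univ_pi fun i => isCompact_Icc).of_isClosed_subset hclosed
    fun θ hθ i _ => abs_le.1 (abs_le_sqrt_of_inertia_eq hm hθ.1 i)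

lemma exists_isLocalMinOn_forceFn {m : Fin N → ℝ} (hm : ∀ i, 0 < m i) (i₀ : Fin N) {c : ℝ}
    (hc : 0 < c) :
    ∃ a, StrictMono a ∧ inertia m a = c ∧ IsLocalMinOn (forceFn m) {θ | inertia m θ = c} a := by
  obtain ⟨p, hp, hIp⟩ := exists_strictMono_inertia_eq hm i₀ hc
  set u := forceFn m p + 1
  have hu : 0 < u := by linarith [forceFn_nonneg hm hp]
  have hpS : p ∈ separatedLevelSet m c u := ⟨hIp, fun i j hij =>
    (mul_le_forceFn_mul_sinh hm hp hij).trans <| mul_le_mul_of_nonneg_right (by linarith)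
      (sinh_pos_iff.2 (sub_pos.2 (hp hij))).le⟩
  have hmono (θ) (hθ : θ ∈ separatedLevelSet m c u) :=
    strictMono_of_mem_separatedLevelSet hm hu hθ
  obtain ⟨a, haS, hamin⟩ := (isCompact_separatedLevelSet hm c u).exists_isMinOn ⟨p, hpS⟩
    fun θ hθ => (hasStrictFDerivAt_forceFn m (hmono θ hθ)).continuousAt.continuousWithinAt
  have ha := hmono a haS
  have hua : forceFn m a < u := (hamin hpS).trans_lt (lt_add_one _)
  have hinterior (i j : Fin N) (hij : i < j) : m i * m j < u * sinh (a j - a i) := by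
    by_contra! h
    exact hua.not_ge <| le_of_mul_le_mul_right (h.trans (mul_le_forceFn_mul_sinh hm ha hij))
      (sinh_pos_iff.2 (sub_pos.2 (ha hij)))
  have hnhds : ∀ᶠ θ in nhds a, ∀ i j, i < j → m i * m j < u * sinh (θ j - θ i) :=
    Filter.eventually_all.2 fun i => Filter.eventually_all.2 fun j =>
      Filter.eventually_imp_distrib_left.2 fun hij =>
      continuousAt_const.eventually_lt (by fun_prop) (hinterior i j hij)
  refine ⟨a, ha, haS.1, ?_⟩
  filter_upwards [nhdsWithin_le_nhds hnhds, self_mem_nhdsWithin] with θ hθ hIθ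
  exact hamin ⟨hIθ, fun i j hij => (hθ i j hij).le⟩

lemma isGeodesicCentralConfig_of_isLocalMinOn {m a : Fin N → ℝ} (ha : StrictMono a)
    (hI : inertia m a ≠ 0) (hmin : IsLocalMinOn (forceFn m) {θ | inertia m θ = inertia m a} a) :
    IsGeodesicCentralConfig m a := by
  obtain ⟨Λ, Λ₀, hne, hsum⟩ := IsLocalExtrOn.exists_multipliers_of_hasStrictFDerivAt_1d
    hmin.isExtr (hasStrictFDerivAt_inertia m a) (hasStrictFDerivAt_forceFn m ha)
  have hcoord (k : Fin N) : Λ * (m k * sinh (2 * a k)) + Λ₀ * forceGrad m a k = 0 := by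
    simpa [dotCLM_single] using congrArg (fun L => L (Pi.single k 1)) hsum
  have hΛ₀ : Λ₀ ≠ 0 := by
    rintro rfl
    have hΛ : Λ ≠ 0 := fun h => hne (by simp [h])
    refine hI (sum_eq_zero fun k _ => ?_)
    have hk : m k * sinh (2 * a k) = 0 := by simpa [hΛ] using hcoord k
    rcases mul_eq_zero.1 hk with h | h
    · simp [h]
    · simp [show a k = 0 by linarith [sinh_eq_zero.1 h]]
  exact ⟨-Λ / Λ₀, fun i => by field_simp; linear_combination hcoord i⟩

lemma exists_isGeodesicCentralConfig {m : Fin N → ℝ} (hm : ∀ i, 0 < m i) (i₀ : Fin N) {c : ℝ}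
    (hc : 0 < c) : ∃ θ, StrictMono θ ∧ inertia m θ = c ∧ IsGeodesicCentralConfig m θ := by
  obtain ⟨a, ha, hIa, hmin⟩ := exists_isLocalMinOn_forceFn hm i₀ hc
  exact ⟨a, ha, hIa, isGeodesicCentralConfig_of_isLocalMinOn ha (hIa ▸ hc.ne') (hIa ▸ hmin)⟩

end GeodesicCentralConfig

/-- Moulton-type theorem on the geodesic `H¹_xw` of `H³`: for each
`c > 0` and each ordering there is exactly one geodesic central configuration. -/
theorem statement14 (N : ℕ) (hN : 2 ≤ N) (m : Fin N → ℝ) (hm : ∀ i, 0 < m i)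
    (c : ℝ) (hc : 0 < c) :
    ∃! θ : Fin N → ℝ, StrictMono θ ∧ (∑ i, m i * Real.sinh (θ i) ^ 2 = c) ∧
      ∃ lam : ℝ, ∀ i,
        (∑ j ∈ Finset.univ.erase i,
            m i * m j * Real.sign (θ j - θ i) / Real.sinh (θ i - θ j) ^ 2) =
          lam * m i * Real.sinh (2 * θ i) := by
  obtain ⟨θ, hθ, hIθ, hθc⟩ :=
    GeodesicCentralConfig.exists_isGeodesicCentralConfig hm ⟨0, by omega⟩ hc
  refine ⟨θ, ⟨hθ, hIθ, hθc⟩, fun σ ⟨hσ, hIσ, hσc⟩ => ?_⟩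
  exact GeodesicCentralConfig.eq_of_isGeodesicCentralConfig hN hm hσ hθ (hIσ.trans hIθ.symm)
    hσc hθc
end
end

section
/- Let m₁, m₂ > 0 and let 0 ≤ θ₁ < θ₂ ≤ 2π with θ₂ − θ₁ ∉ {0, π, 2π}, and set q₁ = (−sin θ₁, 0, cos θ₁, 0), q₂ = (−sin θ₂, 0, cos θ₂, 0) ∈ S³. Then there exists λ ∈ ℝ with ∇_{q₁}U(q) = λ∇_{q₁}I(q) and ∇_{q₂}U(q) = λ∇_{q₂}I(q) (i.e. (q₁,q₂) is a central configuration) if and only if m₁ sin 2θ₁ + m₂ sin 2θ₂ = 0 and sin 2θ₁ ≠ 0. -/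
noncomputable section
open Real Finset

/-! The two bodies at `q(θ) = (-sin θ, 0, cos θ, 0)` attract each other along the geodesic, and the
gradient of `I` at `q(θ)` is also tangent to it: at each body both gradients are multiples of
`t(θ) = -q'(θ) = (cos θ, 0, sin θ, 0)`. Writing `F = m₁m₂ sin(θ₁ - θ₂) / |sin(θ₁ - θ₂)|³ ≠ 0`, the
two equations become `F = -λ m₁ sin 2θ₁` and `F = λ m₂ sin 2θ₂`, which are solvable in `λ` exactly
when `m₁ sin 2θ₁ + m₂ sin 2θ₂ = 0` and `sin 2θ₁ ≠ 0`. -/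

def circleXZ (θ : ℝ) : V4 := ![-sin θ, 0, cos θ, 0]

def circleXZTangent (θ : ℝ) : V4 := ![cos θ, 0, sin θ, 0]

lemma circleXZTangent_ne_zero (θ : ℝ) : circleXZTangent θ ≠ 0 := by
  intro h
  have h0 := congrFun h 0
  have h2 := congrFun h 2
  simp only [circleXZTangent, Matrix.cons_val_zero, Matrix.cons_val_two, Matrix.tail_cons,
    Matrix.head_cons, Pi.zero_apply] at h0 h2
  simpa [h0, h2] using sin_sq_add_cos_sq θ

lemma dot4_circleXZ (a b : ℝ) : dot4 (circleXZ a) (circleXZ b) = cos (b - a) := by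
  simp only [dot4, circleXZ, cos_sub, Matrix.cons_val]
  ring

lemma cos_dS_circleXZ (a b : ℝ) : cos (dS (circleXZ a) (circleXZ b)) = cos (b - a) := by
  rw [dS, dot4_circleXZ, cos_arccos (neg_one_le_cos _) (cos_le_one _)]

lemma sin_dS_circleXZ (a b : ℝ) : sin (dS (circleXZ a) (circleXZ b)) = |sin (a - b)| := by
  rw [dS, dot4_circleXZ, sin_arccos, ← sin_sq, ← sqrt_sq_eq_abs, ← neg_sub, sin_neg, neg_sq]

lemma circleXZ_sub_cos_smul (a b : ℝ) :
    circleXZ b - cos (b - a) • circleXZ a = sin (a - b) • circleXZTangent a := by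
  ext k
  fin_cases k <;>
    simp only [circleXZ, circleXZTangent, sin_sub, cos_sub, Pi.sub_apply, Pi.smul_apply,
      smul_eq_mul, Matrix.cons_val, Fin.zero_eta, Fin.reduceFinMk]
  · linear_combination sin b * sin_sq_add_cos_sq a
  · ring
  · linear_combination -cos b * sin_sq_add_cos_sq a
  · ring

lemma gradUS_fin_two (m : Fin 2 → ℝ) (q : Fin 2 → V4) {i j : Fin 2} (hij : j ≠ i) :
    gradUS m q i = (m i * m j / sin (dS (q i) (q j)) ^ 3) • (q j - cos (dS (q i) (q j)) • q i) := by
  have : Finset.univ.erase i = {j} := by fin_cases i <;> fin_cases j <;> simp_all <;> decide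
  rw [gradUS, this, Finset.sum_singleton]

lemma gradUS_fin_two_circleXZ (m : Fin 2 → ℝ) (q : Fin 2 → V4) {i j : Fin 2} (hij : j ≠ i)
    {a b : ℝ} (ha : q i = circleXZ a) (hb : q j = circleXZ b) :
    gradUS m q i = (m i * m j * (sin (a - b) / |sin (a - b)| ^ 3)) • circleXZTangent a := by
  rw [gradUS_fin_two m q hij, ha, hb, cos_dS_circleXZ, sin_dS_circleXZ, circleXZ_sub_cos_smul,
    smul_smul]
  ring_nf

lemma gradIS_circleXZ {N : ℕ} (m : Fin N → ℝ) (q : Fin N → V4) (i : Fin N) {θ : ℝ}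
    (hθ : q i = circleXZ θ) : gradIS m q i = -(m i * sin (2 * θ)) • circleXZTangent θ := by
  ext k
  fin_cases k <;>
    simp only [gradIS, hθ, circleXZ, circleXZTangent, sin_two_mul, Pi.smul_apply, smul_eq_mul,
      Matrix.cons_val, Fin.zero_eta, Fin.reduceFinMk] <;>
    ring

lemma exists_eq_neg_mul_and_eq_mul_iff {F a b : ℝ} (hF : F ≠ 0) :
    (∃ l : ℝ, F = -(l * a) ∧ F = l * b) ↔ a + b = 0 ∧ a ≠ 0 := by
  constructor
  · rintro ⟨l, hla, hlb⟩
    have hl : l ≠ 0 := by rintro rfl; simp_all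
    refine ⟨?_, ?_⟩
    · exact (mul_eq_zero.mp (by linear_combination hla - hlb : l * (a + b) = 0)).resolve_left hl
    · rintro rfl; simp_all
  · rintro ⟨hab, ha⟩
    refine ⟨-F / a, by field_simp, ?_⟩
    rw [eq_neg_of_add_eq_zero_right hab]
    field_simp

lemma sin_ne_zero_of_pos_of_lt_two_pi {x : ℝ} (h0 : 0 < x) (h2π : x < 2 * π) (hπ : x ≠ π) :
    sin x ≠ 0 := by
  rcases hπ.lt_or_gt with hlt | hgt
  · exact (sin_pos_of_pos_of_lt_pi h0 hlt).ne'
  · have := sin_pos_of_pos_of_lt_pi (sub_pos.mpr hgt) (by linarith : x - π < π)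
    rw [sin_sub_pi] at this
    linarith

lemma isCentral_circleXZ_iff {m1 m2 θ1 θ2 : ℝ} (hm1 : m1 ≠ 0) (hm2 : m2 ≠ 0)
    (hσ : sin (θ1 - θ2) ≠ 0) :
    (∃ lam : ℝ, ∀ i : Fin 2, gradUS ![m1, m2] ![circleXZ θ1, circleXZ θ2] i =
        lam • gradIS ![m1, m2] ![circleXZ θ1, circleXZ θ2] i) ↔
      m1 * sin (2 * θ1) + m2 * sin (2 * θ2) = 0 ∧ sin (2 * θ1) ≠ 0 := by
  set q : Fin 2 → V4 := ![circleXZ θ1, circleXZ θ2]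
  set F := m1 * m2 * (sin (θ1 - θ2) / |sin (θ1 - θ2)| ^ 3)
  have hF : F ≠ 0 := by positivity
  have hU0 : gradUS ![m1, m2] q 0 = F • circleXZTangent θ1 :=
    gradUS_fin_two_circleXZ _ q Fin.zero_ne_one.symm rfl rfl
  have hU1 : gradUS ![m1, m2] q 1 = (-F) • circleXZTangent θ2 := by
    rw [gradUS_fin_two_circleXZ _ q Fin.zero_ne_one rfl rfl, ← neg_sub θ1, sin_neg, abs_neg]
    simp only [F, Matrix.cons_val_zero, Matrix.cons_val_one]
    ring_nf
  simp only [Fin.forall_fin_two, hU0, hU1, gradIS_circleXZ ![m1, m2] q 0 rfl,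
    gradIS_circleXZ ![m1, m2] q 1 rfl, smul_smul, smul_left_inj (circleXZTangent_ne_zero _),
    Matrix.cons_val_zero, Matrix.cons_val_one]
  rw [← mul_ne_zero_iff_left hm1, ← exists_eq_neg_mul_and_eq_mul_iff hF]
  refine exists_congr fun l => and_congr ?_ ?_ <;> constructor <;> intro h <;> linarith

/-- Criterion for two-body central configurations on the geodesic
`S¹_xz` of `S³`. -/
theorem statement15 (m1 m2 : ℝ) (hm1 : 0 < m1) (hm2 : 0 < m2) (θ1 θ2 : ℝ)
    (h1 : 0 ≤ θ1) (h12 : θ1 < θ2) (h2 : θ2 ≤ 2 * π)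
    (hd : θ2 - θ1 ≠ 0 ∧ θ2 - θ1 ≠ π ∧ θ2 - θ1 ≠ 2 * π) :
    (∃ lam : ℝ, ∀ i : Fin 2,
        gradUS (![m1, m2])
          (![(![-Real.sin θ1, 0, Real.cos θ1, 0] : V4),
             (![-Real.sin θ2, 0, Real.cos θ2, 0] : V4)]) i =
          lam • gradIS (![m1, m2])
            (![(![-Real.sin θ1, 0, Real.cos θ1, 0] : V4),
               (![-Real.sin θ2, 0, Real.cos θ2, 0] : V4)]) i) ↔
    (m1 * Real.sin (2 * θ1) + m2 * Real.sin (2 * θ2) = 0 ∧ Real.sin (2 * θ1) ≠ 0) := by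
  obtain ⟨-, hdπ, hd2π⟩ := hd
  have hσ : sin (θ2 - θ1) ≠ 0 :=
    sin_ne_zero_of_pos_of_lt_two_pi (by linarith) (lt_of_le_of_ne (by linarith) hd2π) hdπ
  have hσ' : sin (θ1 - θ2) ≠ 0 := by rwa [← neg_sub, sin_neg, neg_ne_zero]
  exact isCentral_circleXZ_iff hm1.ne' hm2.ne' hσ'
end
end

section
/- Let 0 < m₁ < m₂, M = m₁ + m₂, and c > 0. Consider the set A_c of pairs (θ₁,θ₂) with θ₁ ∈ (0, π/2), θ₂ ∈ (θ₁, 2π), satisfying m₁ sin²θ₁ + m₂ sin²θ₂ = c, m₁ sin 2θ₁ + m₂ sin 2θ₂ = 0, and sin 2θ₁ ≠ 0. Then: A_c has exactly two elements if c ∈ (0, m₁) ∪ (m₂, M), and A_c is empty otherwise (in particular for c ∈ [m₁, m₂] and for c ≥ M). Moreover, for every (θ₁,θ₂) ∈ A_c one has sin²θ₂ = c(m₁−c)/(m₂(M−2c)) and sin²θ₁ = c(m₂−c)/(m₁(M−2c)). -/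
noncomputable section
open Real Finset

/-!
Write `x = sin² θ₁` and `y = sin² θ₂`. The moment of inertia gives `m₁ x + m₂ y = c`, and squaring
the central-configuration equation gives `m₁² x (1 - x) = m₂² y (1 - y)`; since `m₁ ≠ m₂` this
system has the unique solution `x = c (m₂ - c) / (m₁ (M - 2c))`, `y = c (m₁ - c) / (m₂ (M - 2c))`.
Both values lie in `(0, 1)` exactly when `c ∈ (0, m₁) ∪ (m₂, M)`. Given them, `θ₁ ∈ (0, π/2)` is
determined by `x`, while `sin 2θ₂ = -(m₁/m₂) sin 2θ₁ < 0` puts `θ₂` in the second or the fourth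
quadrant, with exactly one choice in each.
-/

def centralConfigs (m1 m2 c : ℝ) : Set (ℝ × ℝ) :=
  {p | p.1 ∈ Set.Ioo 0 (π / 2) ∧ p.2 ∈ Set.Ioo p.1 (2 * π) ∧
    m1 * sin p.1 ^ 2 + m2 * sin p.2 ^ 2 = c ∧
    m1 * sin (2 * p.1) + m2 * sin (2 * p.2) = 0 ∧ sin (2 * p.1) ≠ 0}

theorem inertia_eqs_of_sq_eq {m1 m2 c x y : ℝ} (hI : m1 * x + m2 * y = c)
    (hsq : m1 ^ 2 * x * (1 - x) = m2 ^ 2 * y * (1 - y)) :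
    m1 * x * (m1 + m2 - 2 * c) = c * (m2 - c) ∧ m2 * y * (m1 + m2 - 2 * c) = c * (m1 - c) :=
  ⟨by linear_combination hsq - (c - m1 * x + m2 * y - m2) * hI,
    by linear_combination -hsq - (c + m1 * x - m2 * y - m1) * hI⟩

theorem sq_mul_sin_sq_eq_of_central {m1 m2 a b : ℝ}
    (hF : m1 * sin (2 * a) + m2 * sin (2 * b) = 0) :
    m1 ^ 2 * sin a ^ 2 * (1 - sin a ^ 2) = m2 ^ 2 * sin b ^ 2 * (1 - sin b ^ 2) := by
  have h : (m1 * sin (2 * a)) ^ 2 = (m2 * sin (2 * b)) ^ 2 := by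
    rw [eq_neg_of_add_eq_zero_left hF, neg_sq]
  rw [sin_two_mul, sin_two_mul] at h
  linear_combination h / 4 - m1 ^ 2 * sin a ^ 2 * cos_sq' a + m2 ^ 2 * sin b ^ 2 * cos_sq' b

theorem add_sub_two_mul_ne_zero {m1 m2 c x y : ℝ} (hM : m1 + m2 ≠ 0) (h12 : m1 ≠ m2)
    (h1 : m1 * x * (m1 + m2 - 2 * c) = c * (m2 - c))
    (h2 : m2 * y * (m1 + m2 - 2 * c) = c * (m1 - c)) :
    m1 + m2 - 2 * c ≠ 0 := by
  intro hD
  rw [hD, mul_zero, zero_eq_mul] at h1 h2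
  rcases h1 with h1 | h1 <;> rcases h2 with h2 | h2 <;>
    first | exact hM (by linarith) | exact h12 (by linarith)

theorem central_inertia_eqs {m1 m2 c a b : ℝ} (hI : m1 * sin a ^ 2 + m2 * sin b ^ 2 = c)
    (hF : m1 * sin (2 * a) + m2 * sin (2 * b) = 0) :
    m1 * sin a ^ 2 * (m1 + m2 - 2 * c) = c * (m2 - c) ∧
      m2 * sin b ^ 2 * (m1 + m2 - 2 * c) = c * (m1 - c) :=
  inertia_eqs_of_sq_eq hI (sq_mul_sin_sq_eq_of_central hF)

theorem sin_sq_eq_div_of_central {m1 m2 c a b : ℝ} (hm1 : 0 < m1) (hm2 : 0 < m2) (h12 : m1 ≠ m2)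
    (hI : m1 * sin a ^ 2 + m2 * sin b ^ 2 = c)
    (hF : m1 * sin (2 * a) + m2 * sin (2 * b) = 0) :
    sin b ^ 2 = c * (m1 - c) / (m2 * (m1 + m2 - 2 * c)) ∧
      sin a ^ 2 = c * (m2 - c) / (m1 * (m1 + m2 - 2 * c)) := by
  obtain ⟨h1, h2⟩ := central_inertia_eqs hI hF
  have hD := add_sub_two_mul_ne_zero (by positivity) h12 h1 h2
  constructor
  · rw [eq_div_iff (mul_ne_zero hm2.ne' hD)]; linear_combination h2
  · rw [eq_div_iff (mul_ne_zero hm1.ne' hD)]; linear_combination h1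

theorem mem_Ioo_union_of_mem_centralConfigs {m1 m2 c : ℝ} {p : ℝ × ℝ} (hm1 : 0 < m1)
    (h12 : m1 < m2) (hp : p ∈ centralConfigs m1 m2 c) :
    c ∈ Set.Ioo 0 m1 ∪ Set.Ioo m2 (m1 + m2) := by
  obtain ⟨⟨h10, h1π⟩, _, hI, hF, hne⟩ := hp
  have hm2 : 0 < m2 := hm1.trans h12
  have hx0 : 0 < sin p.1 ^ 2 := by
    have := sin_pos_of_pos_of_lt_pi h10 (by linarith)
    positivity
  have hx1 : sin p.1 ^ 2 < 1 := by
    have := cos_pos_of_mem_Ioo ⟨by linarith, h1π⟩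
    nlinarith [sin_sq_add_cos_sq p.1]
  have hy0 : 0 < sin p.2 ^ 2 := by
    refine sq_pos_of_ne_zero fun h => hne ?_
    have h2 : sin (2 * p.2) = 0 := by rw [sin_two_mul, h]; ring
    rw [h2, mul_zero, add_zero] at hF
    exact (mul_eq_zero.mp hF).resolve_left hm1.ne'
  have hy1 : sin p.2 ^ 2 ≤ 1 := sin_sq_le_one p.2
  obtain ⟨e1, e2⟩ := central_inertia_eqs hI hF
  have hD := add_sub_two_mul_ne_zero (by positivity) h12.ne e1 e2
  have hsign : 0 < (m1 - c) * (m2 - c) := by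
    have h : c ^ 2 * ((m1 - c) * (m2 - c))
        = m1 * m2 * sin p.1 ^ 2 * sin p.2 ^ 2 * (m1 + m2 - 2 * c) ^ 2 := by
      linear_combination -(m1 * sin p.1 ^ 2 * (m1 + m2 - 2 * c)) * e2 - c * (m1 - c) * e1
    refine pos_of_mul_pos_right ?_ (sq_nonneg c)
    rw [h]
    have := sq_pos_of_ne_zero hD
    positivity
  have hc0 : 0 < c := by rw [← hI]; positivity
  have hcM : c < m1 + m2 := by rw [← hI]; nlinarith
  rcases lt_or_ge c m1 with hcm1 | hcm1
  · exact Or.inl ⟨hc0, hcm1⟩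
  · exact Or.inr ⟨by nlinarith, hcM⟩

theorem exists_sin_sq_solution {m1 m2 c : ℝ} (hm1 : 0 < m1) (h12 : m1 < m2)
    (hc : c ∈ Set.Ioo 0 m1 ∪ Set.Ioo m2 (m1 + m2)) :
    ∃ s1 ∈ Set.Ioo (0 : ℝ) 1, ∃ s2 ∈ Set.Ioo (0 : ℝ) 1,
      m1 * s1 + m2 * s2 = c ∧ m1 ^ 2 * s1 * (1 - s1) = m2 ^ 2 * s2 * (1 - s2) := by
  have hm2 : 0 < m2 := hm1.trans h12
  have hc0 : 0 < c := by rcases hc with ⟨h, _⟩ | ⟨h, _⟩ <;> linarith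
  have hcM : 0 < m1 + m2 - c := by rcases hc with ⟨_, h⟩ | ⟨_, h⟩ <;> linarith
  -- with `1 - u = (m2 - c) / (m1 + m2 - 2c)`, the values forced by `inertia_eqs_of_sq_eq` are
  -- `s1 = c (1 - u) / m1` and `s2 = c u / m2`
  obtain ⟨u, hu0, hu1, hu⟩ : ∃ u, 0 < u ∧ u < 1 ∧ u * (m1 + m2 - 2 * c) = m1 - c := by
    rcases hc with ⟨_, h⟩ | ⟨h, _⟩
    · have hD : 0 < m1 + m2 - 2 * c := by linarith
      exact ⟨(m1 - c) / (m1 + m2 - 2 * c), div_pos (by linarith) hD,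
        (div_lt_one hD).mpr (by linarith), div_mul_cancel₀ _ hD.ne'⟩
    · have hD : m1 + m2 - 2 * c < 0 := by linarith
      exact ⟨(m1 - c) / (m1 + m2 - 2 * c), div_pos_of_neg_of_neg (by linarith) hD,
        (div_lt_one_of_neg hD).mpr (by linarith), div_mul_cancel₀ _ hD.ne⟩
  have h1 : m1 - c * (1 - u) = u * (m1 + m2 - c) := by linear_combination -hu
  have h2 : m2 - c * u = (1 - u) * (m1 + m2 - c) := by linear_combination hu
  refine ⟨c * (1 - u) / m1, ⟨by have := sub_pos.mpr hu1; positivity, ?_⟩,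
    c * u / m2, ⟨by positivity, ?_⟩, ?_, ?_⟩
  · rw [div_lt_one hm1]; nlinarith
  · rw [div_lt_one hm2]; nlinarith
  · field_simp; ring
  · have e1 : m1 ^ 2 * (c * (1 - u) / m1) * (1 - c * (1 - u) / m1)
        = c * (1 - u) * (m1 - c * (1 - u)) := by field_simp
    have e2 : m2 ^ 2 * (c * u / m2) * (1 - c * u / m2) = c * u * (m2 - c * u) := by field_simp
    rw [e1, e2, h1, h2]
    ring

theorem sin_arcsin_sqrt {s : ℝ} (h1 : s ≤ 1) : sin (arcsin √s) = √s :=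
  sin_arcsin (by linarith [sqrt_nonneg s]) (sqrt_le_one.mpr h1)

theorem cos_arcsin_sqrt {s : ℝ} (h0 : 0 ≤ s) : cos (arcsin √s) = √(1 - s) := by
  rw [cos_arcsin, sq_sqrt h0]

theorem arcsin_sqrt_mem_Ioo {s : ℝ} (hs : s ∈ Set.Ioo (0 : ℝ) 1) :
    arcsin √s ∈ Set.Ioo 0 (π / 2) :=
  ⟨arcsin_pos.mpr (sqrt_pos.mpr hs.1),
    arcsin_lt_pi_div_two.mpr ((sqrt_lt' one_pos).mpr (by linarith [hs.2]))⟩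

theorem eq_pi_sub_or_eq_two_pi_sub_of_sin_two_mul_neg {θ : ℝ} (h0 : 0 < θ) (h2π : θ < 2 * π)
    (hθ : sin (2 * θ) < 0) : θ = π - arcsin |sin θ| ∨ θ = 2 * π - arcsin |sin θ| := by
  have hsc : sin θ * cos θ < 0 := by rw [sin_two_mul] at hθ; linarith
  rcases mul_neg_iff.mp hsc with ⟨hs, hc⟩ | ⟨hs, hc⟩
  · have hπ : θ < π := by
      by_contra! h
      have := sin_nonneg_of_nonneg_of_le_pi (sub_nonneg.mpr h) (by linarith)
      rw [sin_sub_pi] at this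
      linarith
    have hπ2 : π / 2 < θ := by
      by_contra! h
      linarith [cos_nonneg_of_mem_Icc ⟨by linarith, h⟩]
    left
    rw [abs_of_pos hs, ← sin_pi_sub, arcsin_sin (by linarith) (by linarith)]
    ring
  · have hπ : π < θ := by
      by_contra! h
      linarith [sin_nonneg_of_nonneg_of_le_pi h0.le h]
    have h3π2 : π + π / 2 < θ := by
      by_contra! h
      linarith [cos_nonpos_of_pi_div_two_le_of_le (by linarith) h]
    right
    rw [abs_of_neg hs, ← sin_two_pi_sub, arcsin_sin (by linarith) (by linarith)]
    ring

theorem centralConfigs_subset_pair {m1 m2 c s1 s2 : ℝ} (hm1 : 0 < m1) (hm2 : 0 < m2)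
    (h12 : m1 ≠ m2) (hI : m1 * s1 + m2 * s2 = c)
    (hsq : m1 ^ 2 * s1 * (1 - s1) = m2 ^ 2 * s2 * (1 - s2)) :
    centralConfigs m1 m2 c ⊆
      {(arcsin √s1, π - arcsin √s2), (arcsin √s1, 2 * π - arcsin √s2)} := by
  rintro ⟨θ1, θ2⟩ ⟨⟨h10, h1π⟩, ⟨h21, h2π⟩, hIθ, hFθ, -⟩
  obtain ⟨e1, e2⟩ := central_inertia_eqs hIθ hFθ
  obtain ⟨f1, f2⟩ := inertia_eqs_of_sq_eq hI hsq
  have hD := add_sub_two_mul_ne_zero (by positivity) h12 f1 f2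
  have hx : sin θ1 ^ 2 = s1 := mul_left_cancel₀ hm1.ne' (mul_right_cancel₀ hD (e1.trans f1.symm))
  have hy : sin θ2 ^ 2 = s2 := mul_left_cancel₀ hm2.ne' (mul_right_cancel₀ hD (e2.trans f2.symm))
  have hθ1 : θ1 = arcsin √s1 := by
    rw [← hx, sqrt_sq (sin_pos_of_pos_of_lt_pi h10 (by linarith)).le,
      arcsin_sin (by linarith) h1π.le]
  have hsin2 : sin (2 * θ2) < 0 := by
    have := sin_pos_of_pos_of_lt_pi (x := 2 * θ1) (by linarith) (by linarith)
    nlinarith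
  have hθ2 : θ2 = π - arcsin √s2 ∨ θ2 = 2 * π - arcsin √s2 := by
    rw [← hy, sqrt_sq_eq_abs]
    exact eq_pi_sub_or_eq_two_pi_sub_of_sin_two_mul_neg (by linarith) h2π hsin2
  subst hθ1
  rcases hθ2 with rfl | rfl <;> simp

theorem pair_subset_centralConfigs {m1 m2 c s1 s2 : ℝ} (hm1 : 0 < m1) (hm2 : 0 < m2)
    (hs1 : s1 ∈ Set.Ioo (0 : ℝ) 1) (hs2 : s2 ∈ Set.Ioo (0 : ℝ) 1) (hI : m1 * s1 + m2 * s2 = c)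
    (hsq : m1 ^ 2 * s1 * (1 - s1) = m2 ^ 2 * s2 * (1 - s2)) :
    {(arcsin √s1, π - arcsin √s2), (arcsin √s1, 2 * π - arcsin √s2)} ⊆
      centralConfigs m1 m2 c := by
  have hs1' : 0 < 1 - s1 := sub_pos.mpr hs1.2
  have hs2' : 0 < 1 - s2 := sub_pos.mpr hs2.2
  have key : m1 * (√s1 * √(1 - s1)) = m2 * (√s2 * √(1 - s2)) := by
    rw [← sq_eq_sq₀ (by positivity) (by positivity)]
    simp only [mul_pow, sq_sqrt hs1.1.le, sq_sqrt hs2.1.le, sq_sqrt hs1'.le, sq_sqrt hs2'.le]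
    linear_combination hsq
  set α := arcsin √s1
  set β := arcsin √s2
  obtain ⟨hα0, hαπ⟩ := arcsin_sqrt_mem_Ioo hs1
  obtain ⟨hβ0, hβπ⟩ := arcsin_sqrt_mem_Ioo hs2
  have hsinβ : sin β = √s2 := sin_arcsin_sqrt hs2.2.le
  have hcosβ : cos β = √(1 - s2) := cos_arcsin_sqrt hs2.1.le
  have hmem : ∀ θ, α < θ → θ < 2 * π → sin θ ^ 2 = s2 →
      sin (2 * θ) = -(2 * (√s2 * √(1 - s2))) → (α, θ) ∈ centralConfigs m1 m2 c := by
    intro θ hαθ hθ hsin hsin2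
    have hsin2α : sin (2 * α) = 2 * (√s1 * √(1 - s1)) := by
      rw [sin_two_mul, sin_arcsin_sqrt hs1.2.le, cos_arcsin_sqrt hs1.1.le]; ring
    refine ⟨⟨hα0, hαπ⟩, ⟨hαθ, hθ⟩, ?_, ?_, ?_⟩
    · rw [sin_arcsin_sqrt hs1.2.le, sq_sqrt hs1.1.le, hsin, hI]
    · rw [hsin2α, hsin2]; linear_combination 2 * key
    · rw [hsin2α]
      have := sqrt_pos.mpr hs1.1
      have := sqrt_pos.mpr hs1'
      positivity
  refine Set.pair_subset (hmem _ (by linarith) (by linarith) ?_ ?_)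
    (hmem _ (by linarith) (by linarith) ?_ ?_)
  · rw [sin_pi_sub, hsinβ, sq_sqrt hs2.1.le]
  · rw [sin_two_mul, sin_pi_sub, cos_pi_sub, hsinβ, hcosβ]; ring
  · rw [sin_two_pi_sub, neg_sq, hsinβ, sq_sqrt hs2.1.le]
  · rw [sin_two_mul, sin_two_pi_sub, cos_two_pi_sub, hsinβ, hcosβ]; ring

theorem statement16_general (m1 m2 : ℝ) (hm1 : 0 < m1) (h12 : m1 < m2) (c : ℝ) :
    ((c ∈ Set.Ioo 0 m1 ∪ Set.Ioo m2 (m1 + m2) →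
      Set.ncard {p : ℝ × ℝ | p.1 ∈ Set.Ioo 0 (π / 2) ∧ p.2 ∈ Set.Ioo p.1 (2 * π) ∧
        m1 * Real.sin p.1 ^ 2 + m2 * Real.sin p.2 ^ 2 = c ∧
        m1 * Real.sin (2 * p.1) + m2 * Real.sin (2 * p.2) = 0 ∧
        Real.sin (2 * p.1) ≠ 0} = 2) ∧
     (c ∉ Set.Ioo 0 m1 ∪ Set.Ioo m2 (m1 + m2) →
      {p : ℝ × ℝ | p.1 ∈ Set.Ioo 0 (π / 2) ∧ p.2 ∈ Set.Ioo p.1 (2 * π) ∧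
        m1 * Real.sin p.1 ^ 2 + m2 * Real.sin p.2 ^ 2 = c ∧
        m1 * Real.sin (2 * p.1) + m2 * Real.sin (2 * p.2) = 0 ∧
        Real.sin (2 * p.1) ≠ 0} = ∅) ∧
     (∀ p : ℝ × ℝ, p.1 ∈ Set.Ioo 0 (π / 2) → p.2 ∈ Set.Ioo p.1 (2 * π) →
        m1 * Real.sin p.1 ^ 2 + m2 * Real.sin p.2 ^ 2 = c →
        m1 * Real.sin (2 * p.1) + m2 * Real.sin (2 * p.2) = 0 →
        Real.sin (2 * p.1) ≠ 0 →
        Real.sin p.2 ^ 2 = c * (m1 - c) / (m2 * ((m1 + m2) - 2 * c)) ∧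
        Real.sin p.1 ^ 2 = c * (m2 - c) / (m1 * ((m1 + m2) - 2 * c)))) := by
  have hm2 : 0 < m2 := hm1.trans h12
  refine ⟨fun hc => ?_, fun hc => ?_,
    fun p _ _ hI hF _ => sin_sq_eq_div_of_central hm1 hm2 h12.ne hI hF⟩
  · obtain ⟨s1, hs1, s2, hs2, hI, hsq⟩ := exists_sin_sq_solution hm1 h12 hc
    change (centralConfigs m1 m2 c).ncard = 2
    rw [(centralConfigs_subset_pair hm1 hm2 h12.ne hI hsq).antisymm
      (pair_subset_centralConfigs hm1 hm2 hs1 hs2 hI hsq)]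
    refine Set.ncard_pair fun h => ?_
    have := congrArg Prod.snd h
    linarith [pi_pos]
  · exact Set.eq_empty_of_forall_notMem fun p hp =>
      hc (mem_Ioo_union_of_mem_centralConfigs hm1 h12 hp)

/-- Count of two-body geodesic central configurations on `S¹_xz` with
moment of inertia `c`, for unequal masses. -/
theorem statement16 (m1 m2 : ℝ) (hm1 : 0 < m1) (h12 : m1 < m2) (c : ℝ) (hc : 0 < c) :
    ((c ∈ Set.Ioo 0 m1 ∪ Set.Ioo m2 (m1 + m2) →
      Set.ncard {p : ℝ × ℝ | p.1 ∈ Set.Ioo 0 (π / 2) ∧ p.2 ∈ Set.Ioo p.1 (2 * π) ∧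
        m1 * Real.sin p.1 ^ 2 + m2 * Real.sin p.2 ^ 2 = c ∧
        m1 * Real.sin (2 * p.1) + m2 * Real.sin (2 * p.2) = 0 ∧
        Real.sin (2 * p.1) ≠ 0} = 2) ∧
     (c ∉ Set.Ioo 0 m1 ∪ Set.Ioo m2 (m1 + m2) →
      {p : ℝ × ℝ | p.1 ∈ Set.Ioo 0 (π / 2) ∧ p.2 ∈ Set.Ioo p.1 (2 * π) ∧
        m1 * Real.sin p.1 ^ 2 + m2 * Real.sin p.2 ^ 2 = c ∧
        m1 * Real.sin (2 * p.1) + m2 * Real.sin (2 * p.2) = 0 ∧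
        Real.sin (2 * p.1) ≠ 0} = ∅) ∧
     (∀ p : ℝ × ℝ, p.1 ∈ Set.Ioo 0 (π / 2) → p.2 ∈ Set.Ioo p.1 (2 * π) →
        m1 * Real.sin p.1 ^ 2 + m2 * Real.sin p.2 ^ 2 = c →
        m1 * Real.sin (2 * p.1) + m2 * Real.sin (2 * p.2) = 0 →
        Real.sin (2 * p.1) ≠ 0 →
        Real.sin p.2 ^ 2 = c * (m1 - c) / (m2 * ((m1 + m2) - 2 * c)) ∧
        Real.sin p.1 ^ 2 = c * (m2 - c) / (m1 * ((m1 + m2) - 2 * c)))) :=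
  statement16_general m1 m2 hm1 h12 c
end
end

section
/- Let m > 0, m₁ = m₂ = m, and c = m. Then the set of pairs (θ₁,θ₂) with θ₁ ∈ (0, π/2), θ₂ ∈ (θ₁, 2π), m sin²θ₁ + m sin²θ₂ = m, m sin 2θ₁ + m sin 2θ₂ = 0, and sin 2θ₁ ≠ 0 equals {(θ, θ+π/2) : θ ∈ (0,π/2)} ∪ {(θ, θ+3π/2) : θ ∈ (0,π/2)}; in particular this set is infinite, and for every such pair the two bodies are at spherical distance π/2, i.e. q₁·q₂ = cos(θ₂−θ₁) = 0, so that U = m² cot(π/2) = 0 on the whole set. -/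
noncomputable section
open Real Finset

/-
The constraint `sin² θ₁ + sin² θ₂ = 1` says `cos (θ₁ + θ₂) cos (θ₁ - θ₂) = 0` and the
central-configuration equation `sin 2θ₁ + sin 2θ₂ = 0` says `sin (θ₁ + θ₂) cos (θ₁ - θ₂) = 0`.
Since `cos (θ₁ + θ₂)` and `sin (θ₁ + θ₂)` do not vanish together, both hold exactly when
`cos (θ₂ - θ₁) = 0`, i.e. when the bodies are a quarter circle apart; then `cot d₁₂ = 0`.
-/

open Set

namespace Real

theorem cos_add_mul_cos_sub_eq_one_sub_sin_sq_sub_sin_sq (a b : ℝ) :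
    cos (a + b) * cos (a - b) = 1 - sin a ^ 2 - sin b ^ 2 := by
  rw [cos_add, cos_sub]
  linear_combination cos b ^ 2 * sin_sq_add_cos_sq a + (1 - sin a ^ 2) * sin_sq_add_cos_sq b

theorem two_mul_sin_add_mul_cos_sub (a b : ℝ) :
    2 * (sin (a + b) * cos (a - b)) = sin (2 * a) + sin (2 * b) := by
  rw [sin_add, cos_sub, sin_two_mul, sin_two_mul]
  linear_combination 2 * sin a * cos a * sin_sq_add_cos_sq b +
    2 * sin b * cos b * sin_sq_add_cos_sq a

theorem sin_sq_add_sin_sq_eq_one_and_sin_two_mul_add_eq_zero_iff (a b : ℝ) :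
    sin a ^ 2 + sin b ^ 2 = 1 ∧ sin (2 * a) + sin (2 * b) = 0 ↔ cos (b - a) = 0 := by
  have hc := cos_add_mul_cos_sub_eq_one_sub_sin_sq_sub_sin_sq a b
  have hs := two_mul_sin_add_mul_cos_sub a b
  rw [← cos_neg, neg_sub]
  constructor
  · rintro ⟨h₁, h₂⟩
    calc cos (a - b)
        = (sin (a + b) ^ 2 + cos (a + b) ^ 2) * cos (a - b) := by rw [sin_sq_add_cos_sq, one_mul]
      _ = 0 := by linear_combination (sin (a + b) / 2) * (hs + h₂) + cos (a + b) * (hc - h₁)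
  · intro h
    rw [h, mul_zero] at hc hs
    constructor <;> linarith

theorem cos_eq_zero_iff_of_mem_Ioo {x : ℝ} (hx : x ∈ Ioo 0 (2 * π)) :
    cos x = 0 ↔ x = π / 2 ∨ x = 3 * π / 2 := by
  constructor
  · rw [cos_eq_zero_iff]
    rintro ⟨k, rfl⟩
    have hk₀ : -1 < k := by
      have : (-1 : ℝ) < k := by nlinarith [hx.1, pi_pos]
      exact_mod_cast this
    have hk₁ : k < 2 := by
      have : (k : ℝ) < 2 := by nlinarith [hx.2, pi_pos]
      exact_mod_cast this
    obtain rfl | rfl : k = 0 ∨ k = 1 := by omega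
    · left; norm_num
    · right; push_cast; ring
  · rintro (rfl | rfl)
    · exact cos_pi_div_two
    · rw [show 3 * π / 2 = π / 2 + π by ring, cos_add_pi, cos_pi_div_two, neg_zero]

end Real

/-- The geodesic central configurations of two equal masses `m` on `S¹_xz` with `I = m`. -/
def equalMassCentralConfigs (m : ℝ) : Set (ℝ × ℝ) :=
  {p : ℝ × ℝ | p.1 ∈ Set.Ioo 0 (π / 2) ∧ p.2 ∈ Set.Ioo p.1 (2 * π) ∧
    m * Real.sin p.1 ^ 2 + m * Real.sin p.2 ^ 2 = m ∧
    m * Real.sin (2 * p.1) + m * Real.sin (2 * p.2) = 0 ∧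
    Real.sin (2 * p.1) ≠ 0}

theorem mem_equalMassCentralConfigs_iff {m : ℝ} (hm : m ≠ 0) {p : ℝ × ℝ} :
    p ∈ equalMassCentralConfigs m ↔
      p.1 ∈ Ioo 0 (π / 2) ∧ p.2 ∈ Ioo p.1 (2 * π) ∧ cos (p.2 - p.1) = 0 := by
  obtain ⟨θ₁, θ₂⟩ := p
  have hm_mul {x y : ℝ} : m * x + m * y = m ↔ x + y = 1 := by
    rw [← mul_add, mul_eq_left₀ hm]
  have hm_mul_zero {x y : ℝ} : m * x + m * y = 0 ↔ x + y = 0 := by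
    rw [← mul_add, mul_eq_zero, or_iff_right hm]
  simp only [equalMassCentralConfigs, mem_ofPred_eq, hm_mul, hm_mul_zero,
    ← sin_sq_add_sin_sq_eq_one_and_sin_two_mul_add_eq_zero_iff]
  refine ⟨fun ⟨h₁, h₂, hI, hU, _⟩ ↦ ⟨h₁, h₂, hI, hU⟩, fun ⟨h₁, h₂, hI, hU⟩ ↦ ⟨h₁, h₂, hI, hU, ?_⟩⟩
  exact (sin_pos_of_pos_of_lt_pi (by linarith [h₁.1]) (by linarith [h₁.2])).ne'

theorem equalMassCentralConfigs_eq {m : ℝ} (hm : m ≠ 0) :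
    equalMassCentralConfigs m =
      {p : ℝ × ℝ | ∃ θ ∈ Ioo 0 (π / 2), p = (θ, θ + π / 2)} ∪
        {p : ℝ × ℝ | ∃ θ ∈ Ioo 0 (π / 2), p = (θ, θ + 3 * π / 2)} := by
  ext ⟨θ₁, θ₂⟩
  have hπ := pi_pos
  simp only [mem_equalMassCentralConfigs_iff hm, mem_union, mem_ofPred_eq, Prod.mk.injEq]
  constructor
  · rintro ⟨h₁, h₂, hcos⟩
    have hx : θ₂ - θ₁ ∈ Ioo 0 (2 * π) := ⟨by linarith [h₂.1], by linarith [h₂.2, h₁.1]⟩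
    rcases (cos_eq_zero_iff_of_mem_Ioo hx).1 hcos with h | h
    · exact Or.inl ⟨θ₁, h₁, rfl, by linarith⟩
    · exact Or.inr ⟨θ₁, h₁, rfl, by linarith⟩
  · rintro (⟨θ, hθ, rfl, rfl⟩ | ⟨θ, hθ, rfl, rfl⟩) <;>
      refine ⟨hθ, ⟨by linarith, by linarith [hθ.2]⟩, ?_⟩ <;>
      rw [add_sub_cancel_left, cos_eq_zero_iff_of_mem_Ioo ⟨by positivity, by linarith⟩] <;>
      simp

/-- For two equal masses `m` with `c = m`, the set of geodesic central
configurations on `S¹_xz` is an infinite set on which the bodies sit at distance `π/2`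
and `U = 0`. -/
theorem statement17 (m : ℝ) (hm : 0 < m) :
    ({p : ℝ × ℝ | p.1 ∈ Set.Ioo 0 (π / 2) ∧ p.2 ∈ Set.Ioo p.1 (2 * π) ∧
        m * Real.sin p.1 ^ 2 + m * Real.sin p.2 ^ 2 = m ∧
        m * Real.sin (2 * p.1) + m * Real.sin (2 * p.2) = 0 ∧
        Real.sin (2 * p.1) ≠ 0} =
      ({p : ℝ × ℝ | ∃ θ ∈ Set.Ioo 0 (π / 2), p = (θ, θ + π / 2)} ∪
       {p : ℝ × ℝ | ∃ θ ∈ Set.Ioo 0 (π / 2), p = (θ, θ + 3 * π / 2)})) ∧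
    Set.Infinite {p : ℝ × ℝ | p.1 ∈ Set.Ioo 0 (π / 2) ∧ p.2 ∈ Set.Ioo p.1 (2 * π) ∧
        m * Real.sin p.1 ^ 2 + m * Real.sin p.2 ^ 2 = m ∧
        m * Real.sin (2 * p.1) + m * Real.sin (2 * p.2) = 0 ∧
        Real.sin (2 * p.1) ≠ 0} ∧
    (∀ p : ℝ × ℝ, p.1 ∈ Set.Ioo 0 (π / 2) → p.2 ∈ Set.Ioo p.1 (2 * π) →
      m * Real.sin p.1 ^ 2 + m * Real.sin p.2 ^ 2 = m →
      m * Real.sin (2 * p.1) + m * Real.sin (2 * p.2) = 0 →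
      Real.sin (2 * p.1) ≠ 0 →
      Real.cos (p.2 - p.1) = 0 ∧
      m * m * (Real.cos (Real.arccos (Real.cos (p.2 - p.1))) /
        Real.sin (Real.arccos (Real.cos (p.2 - p.1)))) = 0) := by
  change equalMassCentralConfigs m = _ ∧ (equalMassCentralConfigs m).Infinite ∧ _
  refine ⟨equalMassCentralConfigs_eq hm.ne', ?_, fun p h₁ h₂ hI hU hsin ↦ ?_⟩
  · have hinj : (fun θ : ℝ ↦ (θ, θ + π / 2)).Injective := fun _ _ h ↦ congrArg Prod.fst h
    rw [equalMassCentralConfigs_eq hm.ne']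
    refine ((Ioo_infinite (half_pos pi_pos)).image hinj.injOn).mono ?_
    rintro _ ⟨θ, hθ, rfl⟩
    exact Or.inl ⟨θ, hθ, rfl⟩
  · have hcos := ((mem_equalMassCentralConfigs_iff hm.ne').1 ⟨h₁, h₂, hI, hU, hsin⟩).2.2
    simp [hcos]
end
end

section
/- Let m > 0, r ∈ (0,1), and z ∈ ℝ with r² + z² = 1, and consider three equal masses m₁ = m₂ = m₃ = m at the Lagrangian configuration qⱼ = (r cos(2πj/3), r sin(2πj/3), z, 0), j = 1,2,3, on S³. Then q is a central configuration: ∇_{qᵢ}U(q) = λ∇_{qᵢ}I(q) for all i = 1,2,3, where λ = −m/(2√3 · r³ · (1 − 3r²/4)^{3/2}) < 0, the mutual distances all equal d with cos d = 1 − 3r²/2 and sin³ d = 3√3 r³(1 − 3r²/4)^{3/2}. -/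
/-!
Any two of the three bodies have dot product `r² cos(2π/3) + z² = 1 - 3r²/2`, so the
configuration is equidistant, with `cos d = 1 - 3r²/2` and `sin d = √3 r √(1 - 3r²/4)`.
For equal masses at equal mutual distances, `∇_{qᵢ}U = (m²/sin³d) (Σⱼ qⱼ - (1 + 2 cos d) qᵢ)`.
Here `Σⱼ qⱼ = 3 (0,0,z,0)` and `1 + 2 cos d = 3z²`, so `∇_{qᵢ}U = -(3m²/sin³d) (z² qᵢ - (0,0,z,0))`,
whereas `∇_{qᵢ}I = 2m (z² qᵢ - (0,0,z,0))` for any point of `S³` with `w = 0`.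
-/

noncomputable section
open Real Finset

theorem gradUS_of_dS_eq {N : ℕ} (m d : ℝ) (q : Fin N → V4)
    (hd : ∀ i j, i ≠ j → dS (q i) (q j) = d) (i : Fin N) :
    gradUS (fun _ => m) q i =
      (m * m / sin d ^ 3) • (∑ j, q j - (1 + ((N : ℝ) - 1) * cos d) • q i) := by
  have hcard : (((univ.erase i).card : ℕ) : ℝ) = N - 1 := by
    rw [card_erase_of_mem (mem_univ i), card_univ, Fintype.card_fin,
      Nat.cast_sub (Nat.one_le_of_lt i.2), Nat.cast_one]
  calc gradUS (fun _ => m) q i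
      = ∑ j ∈ univ.erase i, (m * m / sin d ^ 3) • (q j - cos d • q i) :=
        sum_congr rfl fun j hj => by rw [hd i j (ne_of_mem_erase hj).symm]
    _ = _ := by
        rw [← smul_sum, sum_sub_distrib, sum_const, sum_erase_eq_sub (mem_univ i),
          ← Nat.cast_smul_eq_nsmul ℝ, hcard]
        module

theorem gradIS_of_mem_sphere3 {N : ℕ} (m : Fin N → ℝ) (q : Fin N → V4) (i : Fin N)
    (hq : q i ∈ sphere3) (hw : q i 3 = 0) :
    gradIS m q i = (2 * m i) • (q i 2 ^ 2 • q i - ![0, 0, q i 2, 0]) := by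
  have hq' : q i 0 ^ 2 + q i 1 ^ 2 + q i 2 ^ 2 + q i 3 ^ 2 = 1 := hq
  have h01 : q i 0 ^ 2 + q i 1 ^ 2 = 1 - q i 2 ^ 2 := by rw [hw] at hq'; linarith
  rw [gradIS, h01]
  congr 1
  funext k
  fin_cases k <;> simp [hw] <;> ring

theorem sin_arccos_one_sub_pow_three {r : ℝ} (hr : 0 ≤ r) (hr' : 3 * r ^ 2 ≤ 4) :
    sin (arccos (1 - 3 * r ^ 2 / 2)) ^ 3 =
      3 * √3 * r ^ 3 * (1 - 3 * r ^ 2 / 4) ^ ((3 : ℝ) / 2) := by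
  have hu : 0 ≤ 1 - 3 * r ^ 2 / 4 := by linarith
  rw [sin_arccos, show 1 - (1 - 3 * r ^ 2 / 2) ^ 2 = 3 * r ^ 2 * (1 - 3 * r ^ 2 / 4) by ring,
    sqrt_mul (by positivity), sqrt_mul (by norm_num), sqrt_sq hr, sqrt_eq_rpow (1 - _),
    mul_pow, mul_pow, ← rpow_natCast (_ ^ _), ← rpow_mul hu]
  have h3 : √3 ^ 3 = 3 * √3 := by
    rw [pow_succ, sq_sqrt (by norm_num : (0 : ℝ) ≤ 3)]
  norm_num [h3]

def lagrangeConfig (r z : ℝ) : Fin 3 → V4 := fun j =>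
  ![r * cos (2 * π * (j.1 + 1) / 3), r * sin (2 * π * (j.1 + 1) / 3), z, 0]

theorem lagrangeConfig_eq (r z : ℝ) :
    lagrangeConfig r z =
      ![![-(r / 2), √3 / 2 * r, z, 0], ![-(r / 2), -(√3 / 2 * r), z, 0], ![r, 0, z, 0]] := by
  have h₁ : 2 * π * ((0 : ℕ) + 1 : ℝ) / 3 = π - π / 3 := by push_cast; ring
  have h₂ : 2 * π * ((1 : ℕ) + 1 : ℝ) / 3 = π / 3 + π := by push_cast; ring
  have h₃ : 2 * π * ((2 : ℕ) + 1 : ℝ) / 3 = 2 * π := by push_cast; ring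
  funext j
  fin_cases j <;> simp only [lagrangeConfig, Fin.zero_eta, Fin.mk_one, Fin.reduceFinMk]
  · rw [h₁, cos_pi_sub, sin_pi_sub, cos_pi_div_three, sin_pi_div_three]
    ext k; fin_cases k <;> simp <;> ring
  · rw [h₂, cos_add_pi, sin_add_pi, cos_pi_div_three, sin_pi_div_three]
    ext k; fin_cases k <;> simp <;> ring
  · rw [h₃, cos_two_pi, sin_two_pi]
    ext k; fin_cases k <;> simp

theorem sum_lagrangeConfig (r z : ℝ) : ∑ j, lagrangeConfig r z j = (3 : ℝ) • ![0, 0, z, 0] := by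
  rw [lagrangeConfig_eq, Fin.sum_univ_three]
  funext k
  fin_cases k <;> simp <;> ring

theorem dot4_lagrangeConfig {r z : ℝ} (hrz : r ^ 2 + z ^ 2 = 1) {i j : Fin 3} (hij : i ≠ j) :
    dot4 (lagrangeConfig r z i) (lagrangeConfig r z j) = 1 - 3 * r ^ 2 / 2 := by
  have h3 : √3 ^ 2 = 3 := sq_sqrt (by norm_num)
  fin_cases i <;> fin_cases j <;> first
    | exact absurd rfl hij
    | simp [lagrangeConfig_eq, dot4]; first
      | linear_combination hrz
      | linear_combination hrz - r ^ 2 / 4 * h3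

theorem lagrangeConfig_mem_sphere3 {r z : ℝ} (hrz : r ^ 2 + z ^ 2 = 1) (i : Fin 3) :
    lagrangeConfig r z i ∈ sphere3 := by
  have h3 : √3 ^ 2 = 3 := sq_sqrt (by norm_num)
  rw [lagrangeConfig_eq]
  fin_cases i <;> simp [sphere3] <;> first
    | linear_combination hrz
    | linear_combination hrz + r ^ 2 / 4 * h3

theorem dS_lagrangeConfig {r z : ℝ} (hrz : r ^ 2 + z ^ 2 = 1) {i j : Fin 3} (hij : i ≠ j) :
    dS (lagrangeConfig r z i) (lagrangeConfig r z j) = arccos (1 - 3 * r ^ 2 / 2) := by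
  rw [dS, dot4_lagrangeConfig hrz hij]

theorem gradUS_lagrangeConfig (m : ℝ) {r z : ℝ} (hr : 0 < r) (hrz : r ^ 2 + z ^ 2 = 1)
    (i : Fin 3) :
    gradUS (fun _ => m) (lagrangeConfig r z) i =
      (-m / (2 * √3 * r ^ 3 * (1 - 3 * r ^ 2 / 4) ^ ((3 : ℝ) / 2))) •
        gradIS (fun _ => m) (lagrangeConfig r z) i := by
  have hz : lagrangeConfig r z i 2 = z := rfl
  have hcoef : 1 + ((3 : ℕ) - 1 : ℝ) * (1 - 3 * r ^ 2 / 2) = 3 * z ^ 2 := by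
    push_cast; linear_combination -3 * hrz
  rw [gradUS_of_dS_eq m _ _ (fun _ _ => dS_lagrangeConfig hrz),
    gradIS_of_mem_sphere3 _ _ _ (lagrangeConfig_mem_sphere3 hrz i) rfl, sum_lagrangeConfig, cos_arccos (by nlinarith) (by nlinarith),
    sin_arccos_one_sub_pow_three hr.le (by nlinarith), hz, hcoef, smul_smul,
    show (3 : ℝ) • ![0, 0, z, 0] - (3 * z ^ 2) • lagrangeConfig r z i =
      (-3 : ℝ) • (z ^ 2 • lagrangeConfig r z i - ![0, 0, z, 0]) by module,
    smul_smul]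
  congr 1
  field_simp

/-- Lagrangian (equilateral) central configurations of three equal
masses on `S²_xyz ⊂ S³`, with the explicit value of `λ` and of the mutual distances. -/
theorem statement19 (m r z : ℝ) (hm : 0 < m) (hr : r ∈ Set.Ioo (0 : ℝ) 1)
    (hrz : r ^ 2 + z ^ 2 = 1) :
    (∀ i : Fin 3,
      gradUS (fun _ => m)
        (fun j : Fin 3 =>
          (![r * Real.cos (2 * π * (j.1 + 1) / 3), r * Real.sin (2 * π * (j.1 + 1) / 3),
             z, 0] : V4)) i =
      (-m / (2 * Real.sqrt 3 * r ^ 3 * (1 - 3 * r ^ 2 / 4) ^ ((3 : ℝ) / 2))) •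
        gradIS (fun _ => m)
          (fun j : Fin 3 =>
            (![r * Real.cos (2 * π * (j.1 + 1) / 3), r * Real.sin (2 * π * (j.1 + 1) / 3),
               z, 0] : V4)) i) ∧
    (-m / (2 * Real.sqrt 3 * r ^ 3 * (1 - 3 * r ^ 2 / 4) ^ ((3 : ℝ) / 2)) < 0) ∧
    (∀ i j : Fin 3, i ≠ j →
      Real.cos (dS (![r * Real.cos (2 * π * (i.1 + 1) / 3),
          r * Real.sin (2 * π * (i.1 + 1) / 3), z, 0] : V4)
        (![r * Real.cos (2 * π * (j.1 + 1) / 3),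
          r * Real.sin (2 * π * (j.1 + 1) / 3), z, 0] : V4)) = 1 - 3 * r ^ 2 / 2 ∧
      Real.sin (dS (![r * Real.cos (2 * π * (i.1 + 1) / 3),
          r * Real.sin (2 * π * (i.1 + 1) / 3), z, 0] : V4)
        (![r * Real.cos (2 * π * (j.1 + 1) / 3),
          r * Real.sin (2 * π * (j.1 + 1) / 3), z, 0] : V4)) ^ 3 =
        3 * Real.sqrt 3 * r ^ 3 * (1 - 3 * r ^ 2 / 4) ^ ((3 : ℝ) / 2)) := by
  obtain ⟨hr0, -⟩ := hr
  have hu : 0 < 1 - 3 * r ^ 2 / 4 := by nlinarith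
  refine ⟨gradUS_lagrangeConfig m hr0 hrz, ?_, fun i j hij => ?_⟩
  · rw [neg_div, neg_lt_zero]
    positivity
  · change cos (dS (lagrangeConfig r z i) (lagrangeConfig r z j)) = _ ∧
      sin (dS (lagrangeConfig r z i) (lagrangeConfig r z j)) ^ 3 = _
    rw [dS_lagrangeConfig hrz hij]
    exact ⟨cos_arccos (by nlinarith) (by nlinarith),
      sin_arccos_one_sub_pow_three hr0.le (by nlinarith)⟩
end
end
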